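/- Suppose X^n, Y^n, M, W1, W2 are jointly distributed finite discrete random variables such that W1 and W2 are independent, and the Markov chain X^n − (M,W1) − (M,W2) − Y^n holds (i.e., X^n and (M,W2,Y^n) are conditionally independent given (M,W1), and Y^n and (M,W1,X^n) are conditionally independent given (M,W2)). Then I(X^n;Y^n|M) ≤ H(M). -/

import Mathlib

open Finset

def IsPMF {Ω : Type*} [Fintype Ω] (p : Ω → ℝ) : Prop :=
  (∀ ω, 0 ≤ p ω) ∧ ∑ ω, p ω = 1

noncomputable def pr {Ω : Type*} [Fintype Ω] {α : Type*} [Fintype α] [DecidableEq α]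
    (p : Ω → ℝ) (X : Ω → α) (x : α) : ℝ :=
  ∑ ω ∈ Finset.univ.filter (fun ω => X ω = x), p ω

/-- Shannon entropy (base 2) of the random variable `X` under `p`. -/
noncomputable def ent {Ω : Type*} [Fintype Ω] {α : Type*} [Fintype α] [DecidableEq α]
    (p : Ω → ℝ) (X : Ω → α) : ℝ :=
  -∑ x, pr p X x * Real.logb 2 (pr p X x)

/-- Conditional entropy H(X | U). -/
noncomputable def centH {Ω : Type*} [Fintype Ω] {α β : Type*} [Fintype α] [DecidableEq α]
    [Fintype β] [DecidableEq β] (p : Ω → ℝ) (X : Ω → α) (U : Ω → β) : ℝ :=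
  ent p (fun ω => (X ω, U ω)) - ent p U

/-- Mutual information I(X;Y). -/
noncomputable def mi {Ω : Type*} [Fintype Ω] {α β : Type*} [Fintype α] [DecidableEq α]
    [Fintype β] [DecidableEq β] (p : Ω → ℝ) (X : Ω → α) (Y : Ω → β) : ℝ :=
  ent p X + ent p Y - ent p (fun ω => (X ω, Y ω))

/-- Conditional mutual information I(X;Y|U). -/
noncomputable def cmi {Ω : Type*} [Fintype Ω] {α β γ : Type*} [Fintype α] [DecidableEq α]
    [Fintype β] [DecidableEq β] [Fintype γ] [DecidableEq γ]
    (p : Ω → ℝ) (X : Ω → α) (Y : Ω → β) (U : Ω → γ) : ℝ :=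
  centH p X U + centH p Y U - centH p (fun ω => (X ω, Y ω)) U

def IndepRV {Ω : Type*} [Fintype Ω] {α β : Type*} [Fintype α] [DecidableEq α]
    [Fintype β] [DecidableEq β] (p : Ω → ℝ) (X : Ω → α) (Y : Ω → β) : Prop :=
  ∀ x y, pr p (fun ω => (X ω, Y ω)) (x, y) = pr p X x * pr p Y y

/-!
Enlarging both sides, `I(Xⁿ;Yⁿ|M) ≤ I(Xⁿ W₁; Yⁿ W₂ | M)`, and the two Markov chains turn the right
side into `I(W₁;W₂|M) - I(Xⁿ;Yⁿ|M W₁ W₂) ≤ I(W₁;W₂|M)`. Finally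
`I(W₁;W₂|M) ≤ I(W₁;W₂) + H(M) = H(M)` by independence. Every inequality used is the
nonnegativity of a conditional mutual information, i.e. Gibbs' inequality `log t ≤ t - 1` applied
on each fibre of the conditioning variable.
-/

open Real

lemma sub_mul_div_le_mul_log {a b c d : ℝ} (ha : 0 ≤ a) (hab : a ≤ b) (hac : a ≤ c)
    (had : a ≤ d) : a - b * c / d ≤ a * (log a + log d - log b - log c) := by
  rcases ha.eq_or_lt with rfl | ha
  · have : 0 ≤ b * c / d := by positivity
    simpa using this
  have hb : 0 < b := ha.trans_le hab
  have hc : 0 < c := ha.trans_le hac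
  have hd : 0 < d := ha.trans_le had
  have key := log_le_sub_one_of_pos (show 0 < b * c / (a * d) by positivity)
  rw [log_div (by positivity) (by positivity), log_mul hb.ne' hc.ne',
    log_mul ha.ne' hd.ne'] at key
  have hscale : a * (b * c / (a * d)) = b * c / d := by field_simp
  linarith [mul_le_mul_of_nonneg_left key ha.le]

/-- The mutual information of an unnormalised nonnegative array is nonnegative. -/
lemma sum_negMulLog_add_negMulLog_sum_le {α β : Type*} [Fintype α] [Fintype β] (q : α → β → ℝ)
    (hq : ∀ x y, 0 ≤ q x y) :
    ∑ x, ∑ y, negMulLog (q x y) + negMulLog (∑ x, ∑ y, q x y)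
      ≤ ∑ x, negMulLog (∑ y, q x y) + ∑ y, negMulLog (∑ x, q x y) := by
  set A : α → ℝ := fun x => ∑ y, q x y
  set B : β → ℝ := fun y => ∑ x, q x y
  set D := ∑ x, ∑ y, q x y
  have hA : ∀ x y, q x y ≤ A x := fun x y => single_le_sum (fun y _ => hq x y) (mem_univ y)
  have hB : ∀ x y, q x y ≤ B y := fun x y => single_le_sum (fun x _ => hq x y) (mem_univ x)
  have hD : ∀ x y, q x y ≤ D := fun x y =>
    (hA x y).trans (single_le_sum (fun x _ => sum_nonneg fun y _ => hq x y) (mem_univ x))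
  have hgibbs : ∑ x, ∑ y, (q x y - A x * B y / D)
      ≤ ∑ x, ∑ y, q x y * (log (q x y) + log D - log (A x) - log (B y)) :=
    sum_le_sum fun x _ => sum_le_sum fun y _ =>
      sub_mul_div_le_mul_log (hq x y) (hA x y) (hB x y) (hD x y)
  have hmass : ∑ x, ∑ y, A x * B y / D = D := by
    have hBD : ∑ y, B y = D := sum_comm
    simp only [← sum_div, ← sum_mul_sum, hBD]
    exact mul_self_div_self D
  have hAlog : ∑ x, negMulLog (A x) = -∑ x, ∑ y, q x y * log (A x) := by
    simp only [negMulLog, neg_mul, sum_neg_distrib, sum_mul, A]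
  have hBlog : ∑ y, negMulLog (B y) = -∑ x, ∑ y, q x y * log (B y) := by
    rw [sum_comm]
    simp only [negMulLog, neg_mul, sum_neg_distrib, sum_mul, B]
  have hDlog : negMulLog D = -∑ x, ∑ y, q x y * log D := by
    simp only [negMulLog, neg_mul, sum_mul, D]
  have hqlog : ∑ x, ∑ y, negMulLog (q x y) = -∑ x, ∑ y, q x y * log (q x y) := by
    simp only [negMulLog, neg_mul, sum_neg_distrib]
  show ∑ x, ∑ y, negMulLog (q x y) + negMulLog D ≤ ∑ x, negMulLog (A x) + ∑ y, negMulLog (B y)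
  simp only [mul_add, mul_sub, sum_add_distrib, sum_sub_distrib] at hgibbs
  linarith

section

variable {Ω α β γ δ ε : Type*} [Fintype Ω] [Fintype α] [DecidableEq α] [Fintype β]
  [DecidableEq β] [Fintype γ] [DecidableEq γ] [Fintype δ] [DecidableEq δ] [Fintype ε]
  [DecidableEq ε] {p : Ω → ℝ}

lemma pr_nonneg (hp : ∀ ω, 0 ≤ p ω) (X : Ω → α) (x : α) : 0 ≤ pr p X x :=
  sum_nonneg fun ω _ => hp ω

lemma sum_pr (X : Ω → α) : ∑ x, pr p X x = ∑ ω, p ω :=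
  sum_fiberwise univ X p

lemma pr_congr {X : Ω → α} {Y : Ω → β} {x : α} {y : β} (h : ∀ ω, X ω = x ↔ Y ω = y) :
    pr p X x = pr p Y y := by
  rw [pr, pr, filter_congr fun ω _ => h ω]

lemma pr_eq_sum_pr_prod_left (X : Ω → α) (Y : Ω → β) (y : β) :
    pr p Y y = ∑ x, pr p (fun ω => (X ω, Y ω)) (x, y) := by
  rw [pr, ← sum_fiberwise (univ.filter fun ω => Y ω = y) X p]
  refine sum_congr rfl fun x _ => ?_
  rw [pr, filter_filter]
  simp only [Prod.mk.injEq, and_comm]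

lemma pr_eq_sum_pr_prod_right (X : Ω → α) (Y : Ω → β) (x : α) :
    pr p X x = ∑ y, pr p (fun ω => (X ω, Y ω)) (x, y) :=
  (pr_eq_sum_pr_prod_left Y X x).trans <| sum_congr rfl fun _ _ =>
    pr_congr fun _ => by simp only [Prod.mk.injEq, and_comm]

lemma ent_eq_sum_negMulLog (X : Ω → α) :
    ent p X = (∑ x, negMulLog (pr p X x)) / log 2 := by
  simp only [ent, negMulLog, logb, sum_div, ← sum_neg_distrib]
  exact sum_congr rfl fun _ _ => by ring

lemma sum_negMulLog_pr (X : Ω → α) :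
    ∑ x, negMulLog (pr p X x) = -∑ ω, p ω * log (pr p X (X ω)) := by
  rw [← sum_fiberwise univ X fun ω => p ω * log (pr p X (X ω)), ← sum_neg_distrib]
  refine sum_congr rfl fun x _ => ?_
  rw [sum_congr rfl fun ω hω => by rw [(mem_filter.mp hω).2], ← sum_mul, negMulLog, neg_mul]
  rfl

lemma ent_congr {X : Ω → α} {Y : Ω → β} (h : ∀ ω ω', X ω = X ω' ↔ Y ω = Y ω') :
    ent p X = ent p Y := by
  simp only [ent_eq_sum_negMulLog, sum_negMulLog_pr]
  congr 3
  exact funext fun ω => by rw [pr_congr fun ω' => h ω' ω]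

lemma cmi_nonneg (hp : ∀ ω, 0 ≤ p ω) (X : Ω → α) (Y : Ω → β) (U : Ω → γ) :
    0 ≤ cmi p X Y U := by
  set q : γ → α → β → ℝ := fun u x y => pr p (fun ω => ((X ω, Y ω), U ω)) ((x, y), u)
  have hXU : ∀ x u, pr p (fun ω => (X ω, U ω)) (x, u) = ∑ y, q u x y := fun x u =>
    (pr_eq_sum_pr_prod_left Y _ (x, u)).trans <| sum_congr rfl fun _ _ =>
      pr_congr fun _ => by simp only [Prod.mk.injEq]; tauto
  have hYU : ∀ y u, pr p (fun ω => (Y ω, U ω)) (y, u) = ∑ x, q u x y := fun y u =>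
    (pr_eq_sum_pr_prod_left X _ (y, u)).trans <| sum_congr rfl fun _ _ =>
      pr_congr fun _ => by simp only [Prod.mk.injEq]; tauto
  have hU : ∀ u, pr p U u = ∑ x, ∑ y, q u x y := fun u =>
    (pr_eq_sum_pr_prod_left (fun ω => (X ω, Y ω)) U u).trans (Fintype.sum_prod_type _)
  have key := sum_le_sum fun u (_ : u ∈ univ) =>
    sum_negMulLog_add_negMulLog_sum_le (q u) fun _ _ => pr_nonneg hp _ _
  simp only [← hU] at key
  simp only [← hXU, ← hYU, sum_add_distrib] at key
  have hcmi : cmi p X Y U * log 2 = ∑ z, negMulLog (pr p (fun ω => (X ω, U ω)) z)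
      + ∑ z, negMulLog (pr p (fun ω => (Y ω, U ω)) z)
      - ∑ z, negMulLog (pr p (fun ω => ((X ω, Y ω), U ω)) z) - ∑ u, negMulLog (pr p U u) := by
    simp only [cmi, centH, ent_eq_sum_negMulLog]
    field_simp
    ring
  simp only [Fintype.sum_prod_type_right (α₂ := γ)] at hcmi
  simp only [Fintype.sum_prod_type] at hcmi
  exact nonneg_of_mul_nonneg_left (by linarith) (log_pos one_lt_two)

lemma mi_nonneg (hp : IsPMF p) (X : Ω → α) (Y : Ω → β) : 0 ≤ mi p X Y := by
  have key := sum_negMulLog_add_negMulLog_sum_le (fun x y => pr p (fun ω => (X ω, Y ω)) (x, y))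
    fun _ _ => pr_nonneg hp.1 _ _
  simp only [← pr_eq_sum_pr_prod_right, ← pr_eq_sum_pr_prod_left] at key
  rw [sum_pr, hp.2, negMulLog_one, add_zero] at key
  have hmi : mi p X Y * log 2 = ∑ x, negMulLog (pr p X x) + ∑ y, negMulLog (pr p Y y)
      - ∑ z, negMulLog (pr p (fun ω => (X ω, Y ω)) z) := by
    simp only [mi, ent_eq_sum_negMulLog]
    field_simp
  rw [Fintype.sum_prod_type] at hmi
  exact nonneg_of_mul_nonneg_left (by linarith) (log_pos one_lt_two)

lemma centH_nonneg (hp : ∀ ω, 0 ≤ p ω) (X : Ω → α) (U : Ω → γ) : 0 ≤ centH p X U := by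
  have key := cmi_nonneg hp X X U
  have hXX : ent p (fun ω => ((X ω, X ω), U ω)) = ent p (fun ω => (X ω, U ω)) :=
    ent_congr fun _ _ => by simp only [Prod.mk.injEq, and_self]
  simp only [cmi, centH, hXX] at key ⊢
  linarith

lemma mi_eq_zero_of_indepRV (hp : ∑ ω, p ω = 1) {X : Ω → α} {Y : Ω → β} (h : IndepRV p X Y) :
    mi p X Y = 0 := by
  have h' : ∀ x y, pr p (fun ω => (X ω, Y ω)) (x, y) = pr p X x * pr p Y y := h
  have hXY : ent p (fun ω => (X ω, Y ω)) = ent p X + ent p Y := by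
    simp only [ent_eq_sum_negMulLog, Fintype.sum_prod_type, h', negMulLog_mul, sum_add_distrib,
      ← mul_sum, ← sum_mul, sum_pr, hp]
    ring
  rw [mi, hXY]
  ring

lemma cmi_comm (X : Ω → α) (Y : Ω → β) (U : Ω → γ) : cmi p X Y U = cmi p Y X U := by
  have hXY : ent p (fun ω => ((X ω, Y ω), U ω)) = ent p (fun ω => ((Y ω, X ω), U ω)) :=
    ent_congr fun _ _ => by simp only [Prod.mk.injEq]; tauto
  simp only [cmi, centH, hXY]
  ring

lemma cmi_prod_left (X : Ω → α) (Z : Ω → δ) (Y : Ω → β) (U : Ω → γ) :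
    cmi p (fun ω => (X ω, Z ω)) Y U = cmi p X Y U + cmi p Z Y (fun ω => (X ω, U ω)) := by
  have h₁ : ent p (fun ω => ((X ω, Z ω), U ω)) = ent p (fun ω => (Z ω, X ω, U ω)) :=
    ent_congr fun _ _ => by simp only [Prod.mk.injEq]; tauto
  have h₂ : ent p (fun ω => (((X ω, Z ω), Y ω), U ω)) = ent p (fun ω => ((Z ω, Y ω), X ω, U ω)) :=
    ent_congr fun _ _ => by simp only [Prod.mk.injEq]; tauto
  have h₃ : ent p (fun ω => ((X ω, Y ω), U ω)) = ent p (fun ω => (Y ω, X ω, U ω)) :=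
    ent_congr fun _ _ => by simp only [Prod.mk.injEq]; tauto
  simp only [cmi, centH, h₁, h₂, h₃]
  ring

lemma cmi_le_cmi_prod_left (hp : ∀ ω, 0 ≤ p ω) (X : Ω → α) (Z : Ω → δ) (Y : Ω → β)
    (U : Ω → γ) : cmi p X Y U ≤ cmi p (fun ω => (X ω, Z ω)) Y U := by
  rw [cmi_prod_left]
  linarith [cmi_nonneg hp Z Y fun ω => (X ω, U ω)]

lemma cmi_le_cmi_prod (hp : ∀ ω, 0 ≤ p ω) (X : Ω → α) (X' : Ω → δ) (Y : Ω → β) (Y' : Ω → ε)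
    (U : Ω → γ) :
    cmi p X Y U ≤ cmi p (fun ω => (X ω, X' ω)) (fun ω => (Y ω, Y' ω)) U :=
  calc cmi p X Y U
      ≤ cmi p (fun ω => (X ω, X' ω)) Y U := cmi_le_cmi_prod_left hp X X' Y U
    _ = cmi p Y (fun ω => (X ω, X' ω)) U := cmi_comm _ _ _
    _ ≤ cmi p (fun ω => (Y ω, Y' ω)) (fun ω => (X ω, X' ω)) U := cmi_le_cmi_prod_left hp _ _ _ _
    _ = cmi p (fun ω => (X ω, X' ω)) (fun ω => (Y ω, Y' ω)) U := cmi_comm _ _ _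

lemma cmi_le_mi_add_ent (hp : IsPMF p) (X : Ω → α) (Y : Ω → β) (U : Ω → γ) :
    cmi p X Y U ≤ mi p X Y + ent p U := by
  have hXU := mi_nonneg hp X U
  have hYU := mi_nonneg hp Y U
  have hXY := centH_nonneg hp.1 U fun ω => (X ω, Y ω)
  have hswap : ent p (fun ω => (U ω, X ω, Y ω)) = ent p (fun ω => ((X ω, Y ω), U ω)) :=
    ent_congr fun _ _ => by simp only [Prod.mk.injEq]; tauto
  simp only [cmi, centH, mi, hswap] at hXU hYU hXY ⊢
  linarith

lemma cmi_prod_add_cmi_eq_of_markov {X : Ω → α} {Y : Ω → β} {M : Ω → γ} {W₁ : Ω → δ}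
    {W₂ : Ω → ε}
    (h₁ : cmi p X (fun ω => (M ω, W₂ ω, Y ω)) (fun ω => (M ω, W₁ ω)) = 0)
    (h₂ : cmi p Y (fun ω => (M ω, W₁ ω, X ω)) (fun ω => (M ω, W₂ ω)) = 0) :
    cmi p (fun ω => (X ω, W₁ ω)) (fun ω => (Y ω, W₂ ω)) M
      + cmi p X Y (fun ω => (M ω, W₁ ω, W₂ ω)) = cmi p W₁ W₂ M := by
  simp only [cmi, centH] at h₁ h₂ ⊢
  -- each `eᵢ` lists the same variables in two orders; the claim is then `h₁ + h₂`
  have e₁ : ent p (fun ω => (X ω, M ω, W₁ ω)) = ent p (fun ω => ((X ω, W₁ ω), M ω)) :=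
    ent_congr fun _ _ => by simp only [Prod.mk.injEq]; tauto
  have e₂ : ent p (fun ω => (Y ω, M ω, W₂ ω)) = ent p (fun ω => ((Y ω, W₂ ω), M ω)) :=
    ent_congr fun _ _ => by simp only [Prod.mk.injEq]; tauto
  have e₃ : ent p (fun ω => (M ω, W₁ ω)) = ent p (fun ω => (W₁ ω, M ω)) :=
    ent_congr fun _ _ => by simp only [Prod.mk.injEq]; tauto
  have e₄ : ent p (fun ω => (M ω, W₂ ω)) = ent p (fun ω => (W₂ ω, M ω)) :=
    ent_congr fun _ _ => by simp only [Prod.mk.injEq]; tauto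
  have e₅ : ent p (fun ω => (M ω, W₁ ω, W₂ ω)) = ent p (fun ω => ((W₁ ω, W₂ ω), M ω)) :=
    ent_congr fun _ _ => by simp only [Prod.mk.injEq]; tauto
  have e₆ : ent p (fun ω => ((M ω, W₂ ω, Y ω), M ω, W₁ ω))
      = ent p (fun ω => (Y ω, M ω, W₁ ω, W₂ ω)) :=
    ent_congr fun _ _ => by simp only [Prod.mk.injEq]; tauto
  have e₇ : ent p (fun ω => ((M ω, W₁ ω, X ω), M ω, W₂ ω))
      = ent p (fun ω => (X ω, M ω, W₁ ω, W₂ ω)) :=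
    ent_congr fun _ _ => by simp only [Prod.mk.injEq]; tauto
  have e₈ : ent p (fun ω => ((X ω, M ω, W₂ ω, Y ω), M ω, W₁ ω))
      = ent p (fun ω => (((X ω, W₁ ω), Y ω, W₂ ω), M ω)) :=
    ent_congr fun _ _ => by simp only [Prod.mk.injEq]; tauto
  have e₉ : ent p (fun ω => ((Y ω, M ω, W₁ ω, X ω), M ω, W₂ ω))
      = ent p (fun ω => (((X ω, W₁ ω), Y ω, W₂ ω), M ω)) :=
    ent_congr fun _ _ => by simp only [Prod.mk.injEq]; tauto
  have e₁₀ : ent p (fun ω => ((X ω, Y ω), M ω, W₁ ω, W₂ ω))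
      = ent p (fun ω => (((X ω, W₁ ω), Y ω, W₂ ω), M ω)) :=
    ent_congr fun _ _ => by simp only [Prod.mk.injEq]; tauto
  linarith

end

/-- If `W₁ ⊥ W₂` and the Markov chain `Xⁿ − (M,W₁) − (M,W₂) − Yⁿ` holds
(expressed via vanishing conditional mutual informations), then
`I(Xⁿ;Yⁿ|M) ≤ H(M)`. -/
theorem stmt4 {Ω α β γ δ ε : Type*} [Fintype Ω] [Fintype α] [DecidableEq α]
    [Fintype β] [DecidableEq β] [Fintype γ] [DecidableEq γ]
    [Fintype δ] [DecidableEq δ] [Fintype ε] [DecidableEq ε]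
    (p : Ω → ℝ) (hp : IsPMF p)
    (Xn : Ω → α) (Yn : Ω → β) (M : Ω → γ) (W₁ : Ω → δ) (W₂ : Ω → ε)
    (hInd : IndepRV p W₁ W₂)
    (hMarkov1 : cmi p Xn (fun ω => (M ω, W₂ ω, Yn ω)) (fun ω => (M ω, W₁ ω)) = 0)
    (hMarkov2 : cmi p Yn (fun ω => (M ω, W₁ ω, Xn ω)) (fun ω => (M ω, W₂ ω)) = 0) :
    cmi p Xn Yn M ≤ ent p M :=
  calc cmi p Xn Yn M
      ≤ cmi p (fun ω => (Xn ω, W₁ ω)) (fun ω => (Yn ω, W₂ ω)) M := cmi_le_cmi_prod hp.1 _ _ _ _ _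
    _ ≤ cmi p W₁ W₂ M := by
      linarith [cmi_prod_add_cmi_eq_of_markov hMarkov1 hMarkov2,
        cmi_nonneg hp.1 Xn Yn fun ω => (M ω, W₁ ω, W₂ ω)]
    _ ≤ mi p W₁ W₂ + ent p M := cmi_le_mi_add_ent hp _ _ _
    _ = ent p M := by rw [mi_eq_zero_of_indepRV hp.2 hInd, zero_add]
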